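/- arXiv:1410.7092 — 6 statements merged into one kernel-verified Lean document; each statement's English description precedes it below -/
import Mathlib

section
/- Let W(i,j) = (j-i)·r_j − C(j-i+1,2) − R_{j-1} + R_{i-1}, where R_b = r_1 + r_2 + ... + r_b and r_1 < r_2 < ... < r_n are integers. Then for all 1 ≤ i < j < n, W(i,j) + W(i+1,j+1) ≤ W(i,j+1) + W(i+1,j) (the quadrangle/Monge inequality). -/
/-- Partial sum `R_b = r_1 + ... + r_b`. -/
def partialSum (r : ℕ → ℤ) (b : ℕ) : ℤ := ∑ a ∈ Finset.Icc 1 b, r a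

/-- `W(i,j) = (j-i)·r_j − C(j-i+1,2) − R_{j-1} + R_{i-1}`. -/
def W (r : ℕ → ℤ) (i j : ℕ) : ℤ :=
  ((j : ℤ) - (i : ℤ)) * r j - ((j - i + 1).choose 2 : ℤ) - partialSum r (j - 1) + partialSum r (i - 1)

theorem W_quadrangle (n : ℕ) (r : ℕ → ℤ) (hr : StrictMono r)
    (i j : ℕ) (hi : 1 ≤ i) (hij : i < j) (hjn : j < n) :
    W r i j + W r (i + 1) (j + 1) ≤ W r i (j + 1) + W r (i + 1) j := by
  obtain ⟨d, rfl⟩ : ∃ d, j = i + d + 1 := ⟨j - i - 1, by omega⟩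
  simp only [W]
  have h1 : i + d + 1 - i = d + 1 := by omega
  have h2 : i + d + 1 + 1 - i = d + 2 := by omega
  have h3 : i + d + 1 + 1 - (i + 1) = d + 1 := by omega
  have h4 : i + d + 1 - (i + 1) = d := by omega
  have h5 : i + d + 1 + 1 - 1 = i + d + 1 := by omega
  have h6 : i + d + 1 - 1 = i + d := by omega
  have h7 : i + 1 - 1 = i := by omega
  rw [h1, h2, h3, h4, h5, h6, h7]
  have c1 : (((d + 2) + 1).choose 2 : ℤ) = ((d + 1) + 1).choose 2 + (d + 2) := by
    rw [Nat.choose_succ_succ]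
    push_cast [Nat.choose_one_right]
    ring
  have c2 : (((d + 1) + 1).choose 2 : ℤ) = (d + 1).choose 2 + (d + 1) := by
    rw [Nat.choose_succ_succ]
    push_cast [Nat.choose_one_right]
    ring
  have hrr : r (i + d + 1) < r (i + d + 1 + 1) := hr (by omega)
  push_cast
  nlinarith [c1, c2, hrr]
end

section
/- Greedy hitting set is optimal: the set H produced by the deadline-greedy algorithm on intervals I_1,...,I_n (sorted by deadline) has minimum cardinality among all hitting sets of I_1,...,I_n. -/
/-!
Let `J` be the set of indices at which the greedy procedure adds a point, so that `H ⊆ d '' J`.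
The intervals `I_j`, `j ∈ J`, are pairwise disjoint: if `i < j` are both in `J` and some `x`
lies in `I_i ∩ I_j`, then `r_j ≤ x ≤ d_i ≤ d_j`, so the point `d_i`, already in the greedy set,
hits `I_j` and `j` would not have been picked. Any hitting set needs a separate point for each
of these disjoint intervals, hence has at least `|J| ≥ |H|` elements.
-/

/-- The deadline-greedy hitting-set procedure: intervals `[r j, d j]` are scanned
in order `j = 0, 1, ..., n-1` (assumed sorted by deadline), and `d j` is added to
the current set whenever interval `j` is not yet hit. -/
noncomputable def greedyHS (r d : ℕ → ℝ) : ℕ → Finset ℝ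
  | 0 => ∅
  | j + 1 =>
    have := Classical.propDecidable (∃ x ∈ greedyHS r d j, r j ≤ x ∧ x ≤ d j)
    if ∃ x ∈ greedyHS r d j, r j ≤ x ∧ x ≤ d j then greedyHS r d j
    else insert (d j) (greedyHS r d j)

open Finset

theorem card_le_card_of_forall_exists_mem_of_pairwiseDisjoint {ι α : Type*} {S : Finset ι}
    {I : ι → Set α} (hdisj : (S : Set ι).PairwiseDisjoint I) {H : Finset α}
    (hmeet : ∀ j ∈ S, ∃ x ∈ H, x ∈ I j) : #S ≤ #H :=
  card_le_card_of_forall_subsingleton (fun j x => x ∈ I j) hmeet fun _ _ _ ⟨hi, hxi⟩ _ ⟨hj, hxj⟩ =>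
    hdisj.elim hi hj (Set.not_disjoint_iff.mpr ⟨_, hxi, hxj⟩)

section Greedy

variable {r d : ℕ → ℝ}

theorem greedyHS_succ_of_hit {j : ℕ} (h : ∃ x ∈ greedyHS r d j, r j ≤ x ∧ x ≤ d j) :
    greedyHS r d (j + 1) = greedyHS r d j := by
  rw [greedyHS, if_pos h]

theorem greedyHS_succ_of_not_hit {j : ℕ} (h : ¬ ∃ x ∈ greedyHS r d j, r j ≤ x ∧ x ≤ d j) :
    greedyHS r d (j + 1) = insert (d j) (greedyHS r d j) := by
  rw [greedyHS, if_neg h]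

theorem greedyHS_mono : Monotone (greedyHS r d) := by
  refine monotone_nat_of_le_succ fun j => ?_
  by_cases h : ∃ x ∈ greedyHS r d j, r j ≤ x ∧ x ≤ d j
  · exact (greedyHS_succ_of_hit h).ge
  · exact (greedyHS_succ_of_not_hit h).ge.trans' (subset_insert _ _)

variable (r d) in
open Classical in
noncomputable def greedyPicks (n : ℕ) : Finset ℕ :=
  {j ∈ range n | ¬ ∃ x ∈ greedyHS r d j, r j ≤ x ∧ x ≤ d j}

theorem mem_greedyPicks {n j : ℕ} :
    j ∈ greedyPicks r d n ↔ j < n ∧ ¬ ∃ x ∈ greedyHS r d j, r j ≤ x ∧ x ≤ d j := by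
  simp [greedyPicks]

theorem greedyHS_subset_image_greedyPicks (n : ℕ) :
    greedyHS r d n ⊆ (greedyPicks r d n).image d := by
  induction n with
  | zero => simp [greedyHS]
  | succ n ih =>
    have hpicks : greedyPicks r d n ⊆ greedyPicks r d (n + 1) := fun j hj => by
      rw [mem_greedyPicks] at hj ⊢
      exact ⟨hj.1.trans n.lt_succ_self, hj.2⟩
    by_cases h : ∃ x ∈ greedyHS r d n, r n ≤ x ∧ x ≤ d n
    · rw [greedyHS_succ_of_hit h]
      exact ih.trans (image_subset_image hpicks)
    · rw [greedyHS_succ_of_not_hit h]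
      refine insert_subset (mem_image_of_mem d ?_) (ih.trans (image_subset_image hpicks))
      exact mem_greedyPicks.mpr ⟨n.lt_succ_self, h⟩

theorem card_greedyHS_le_card_greedyPicks (n : ℕ) :
    #(greedyHS r d n) ≤ #(greedyPicks r d n) :=
  (card_le_card (greedyHS_subset_image_greedyPicks n)).trans card_image_le

theorem mem_greedyHS_of_mem_greedyPicks {n i j : ℕ} (hi : i ∈ greedyPicks r d n) (hij : i < j) :
    d i ∈ greedyHS r d j := by
  refine greedyHS_mono (Nat.succ_le_of_lt hij) ?_
  rw [greedyHS_succ_of_not_hit (mem_greedyPicks.mp hi).2]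
  exact mem_insert_self _ _

theorem pairwiseDisjoint_greedyPicks {n : ℕ} (hsorted : ∀ i j, i ≤ j → j < n → d i ≤ d j) :
    (greedyPicks r d n : Set ℕ).PairwiseDisjoint fun j => Set.Icc (r j) (d j) := by
  have hlt : ∀ i ∈ greedyPicks r d n, ∀ j ∈ greedyPicks r d n, i < j →
      Disjoint (Set.Icc (r i) (d i)) (Set.Icc (r j) (d j)) := by
    intro i hi j hj hij
    refine Set.disjoint_left.mpr fun x hxi hxj => (mem_greedyPicks.mp hj).2 ?_
    exact ⟨d i, mem_greedyHS_of_mem_greedyPicks hi hij, hxj.1.trans hxi.2,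
      hsorted i j hij.le (mem_greedyPicks.mp hj).1⟩
  intro i hi j hj hne
  rcases lt_or_gt_of_ne hne with h | h
  · exact hlt i hi j hj h
  · exact (hlt j hj i hi h).symm

end Greedy

theorem greedy_hitting_set_optimal_general (n : ℕ) (r d : ℕ → ℝ)
    (hsorted : ∀ i j, i ≤ j → j < n → d i ≤ d j)
    (H' : Finset ℝ) (hH' : ∀ j < n, ∃ x ∈ H', r j ≤ x ∧ x ≤ d j) :
    (greedyHS r d n).card ≤ H'.card :=
  (card_greedyHS_le_card_greedyPicks n).trans <|
    card_le_card_of_forall_exists_mem_of_pairwiseDisjoint (pairwiseDisjoint_greedyPicks hsorted)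
      fun j hj => hH' j (mem_greedyPicks.mp hj).1

theorem greedy_hitting_set_optimal (n : ℕ) (r d : ℕ → ℝ)
    (hrd : ∀ j < n, r j ≤ d j)
    (hsorted : ∀ i j, i ≤ j → j < n → d i ≤ d j)
    (H' : Finset ℝ) (hH' : ∀ j < n, ∃ x ∈ H', r j ≤ x ∧ x ≤ d j) :
    (greedyHS r d n).card ≤ H'.card :=
  greedy_hitting_set_optimal_general n r d hsorted H' hH'
end

section
/- Block shifting lemma: consider a schedule of unit jobs (an injective assignment S of jobs to integer time slots with S(j) ≥ r_j, all release times r_j distinct). Let B = [u,v] be a block of the schedule (a maximal interval of busy slots), and suppose the job scheduled at slot v has release time strictly less than v. Then there exists a schedule of the same jobs occupying exactly the slots [u−1, v−1] ∪ (busy slots outside B), i.e., the block B can be shifted left by one slot. -/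
/-!
Induct on the length of the block `[u, v)`, carrying along a *pending* job `p` with `r p < v`
that still has to be placed somewhere in `[u - 1, v)`; its current slot `S p ≥ v` is ignored.
For the block `[u, v]`, compare `p` with the job `q` in slot `v`: both are released by `v`, and
since release times are distinct one of them is released strictly before `v`. That one stays
pending for the shorter block `[u, v)`, the other one takes slot `v`. When the block is empty,
the pending job goes into the idle slot `u - 1`. The theorem is the case where the pending job
is the one in the last slot of the block.
-/

open Function

theorem Function.Injective.update_of_forall_ne {α β : Type*} [DecidableEq α] {f : α → β}
    (hf : Injective f) {a : α} {b : β} (hb : ∀ x, x ≠ a → f x ≠ b) :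
    Injective (update f a b) := by
  intro x y hxy
  by_cases hx : x = a <;> by_cases hy : y = a
  · rw [hx, hy]
  · rw [hx, update_self, update_of_ne hy] at hxy
    exact absurd hxy.symm (hb y hy)
  · rw [hy, update_self, update_of_ne hx] at hxy
    exact absurd hxy (hb x hx)
  · rw [update_of_ne hx, update_of_ne hy] at hxy
    exact hf hxy

section Schedule

variable {ι : Type*} [DecidableEq ι] {r : ι → ℤ}

theorem forall_le_update {S : ι → ℤ} (hfeas : ∀ j, r j ≤ S j) {b : ι} {t : ℤ} (hb : r b ≤ t) :
    ∀ j, r j ≤ update S b t j :=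
  (forall_update_iff S fun j s => r j ≤ s).2 ⟨hb, fun j _ => hfeas j⟩

theorem exists_shift_with_pending (hr : Injective r) {u : ℤ} (v : ℤ) (huv : u ≤ v) {S : ι → ℤ}
    (hS : Injective S) (hfeas : ∀ j, r j ≤ S j)
    (hbusy : ∀ t, u ≤ t → t < v → ∃ j, S j = t) (hleft : ∀ j, S j ≠ u - 1)
    {p : ι} (hSp : v ≤ S p) (hrp : r p < v) :
    ∃ S' : ι → ℤ, Injective S' ∧ (∀ j, r j ≤ S' j) ∧
      (∀ j, j ≠ p → (S j < u ∨ v ≤ S j) → S' j = S j) ∧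
      (∀ j, (j = p ∨ u ≤ S j ∧ S j < v) → u - 1 ≤ S' j ∧ S' j < v) := by
  induction v, huv using Int.leInduction generalizing p with
  | base =>
    refine ⟨update S p (u - 1), hS.update_of_forall_ne fun j _ => hleft j,
      forall_le_update hfeas (by omega), fun j hj _ => update_of_ne hj .., ?_⟩
    rintro j (rfl | h)
    · simp
    · omega
  | succ v huv ih =>
    obtain ⟨q, hq⟩ := hbusy v huv (by omega)
    have hqp : q ≠ p := by rintro rfl; omega
    have hrq : r q ≤ v := hq ▸ hfeas q
    -- `a` stays pending, `b` takes slot `v`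
    obtain ⟨a, b, hab, hra, hrb⟩ :
        ∃ a b, (a = p ∧ b = q ∨ a = q ∧ b = p) ∧ r a < v ∧ r b ≤ v := by
      rcases hrq.lt_or_eq with hlt | heq
      · exact ⟨q, p, Or.inr ⟨rfl, rfl⟩, hlt, by omega⟩
      · have : r p ≠ r q := hr.ne hqp.symm
        exact ⟨p, q, Or.inl ⟨rfl, rfl⟩, by omega, hrq⟩
    have hSa : v ≤ S a := by rcases hab with ⟨rfl, -⟩ | ⟨rfl, -⟩ <;> omega
    have hpq : ∀ j, j ≠ a ∧ j ≠ b ↔ j ≠ p ∧ j ≠ q := by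
      rcases hab with ⟨rfl, rfl⟩ | ⟨rfl, rfl⟩ <;> tauto
    obtain ⟨S', hS', hfeas', hout, hin⟩ :=
      ih (fun t ht ht' => hbusy t ht (by omega)) hSa hra
    have hSj : ∀ j, j ≠ a → j ≠ b → S j ≠ v := fun j ha hb h =>
      ((hpq j).1 ⟨ha, hb⟩).2 (hS (h.trans hq.symm))
    refine ⟨update S' b v, hS'.update_of_forall_ne ?_, forall_le_update hfeas' hrb, ?_, ?_⟩
    · intro j hjb
      rcases eq_or_ne j a with rfl | hja
      · exact (hin j (Or.inl rfl)).2.ne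
      by_cases hj : u ≤ S j ∧ S j < v
      · exact (hin j (Or.inr hj)).2.ne
      · rw [hout j hja (by omega)]
        exact hSj j hja hjb
    · intro j hjp hj
      have hjq : j ≠ q := by rintro rfl; omega
      obtain ⟨hja, hjb⟩ := (hpq j).2 ⟨hjp, hjq⟩
      rw [update_of_ne hjb, hout j hja (by omega)]
    · intro j hj
      rcases eq_or_ne j b with rfl | hjb
      · simp only [update_self]; omega
      rw [update_of_ne hjb]
      rcases eq_or_ne j a with rfl | hja
      · have := hin j (Or.inl rfl); omega
      have hj := hj.resolve_left ((hpq j).1 ⟨hja, hjb⟩).1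
      have := hSj j hja hjb
      have := hin j (Or.inr (by omega))
      omega

end Schedule

theorem block_shift_left_general (n : ℕ) (r : Fin n → ℤ) (hr : Function.Injective r)
    (S : Fin n → ℤ) (hS : Function.Injective S) (hfeas : ∀ j, r j ≤ S j)
    (u v : ℤ) (huv : u ≤ v)
    (hbusy : ∀ t : ℤ, u ≤ t → t ≤ v → ∃ j, S j = t)
    (hleft : ∀ j, S j ≠ u - 1)
    (j₀ : Fin n) (hj₀ : S j₀ = v) (hrj₀ : r j₀ < v) :
    ∃ S' : Fin n → ℤ, Function.Injective S' ∧ (∀ j, r j ≤ S' j) ∧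
      (∀ j, (S j < u ∨ v < S j) → S' j = S j) ∧
      (∀ j, u ≤ S j → S j ≤ v → u - 1 ≤ S' j ∧ S' j ≤ v - 1) := by
  obtain ⟨S', hS', hfeas', hout, hin⟩ := exists_shift_with_pending hr v huv hS hfeas
    (fun t ht ht' => hbusy t ht ht'.le) hleft hj₀.ge hrj₀
  refine ⟨S', hS', hfeas', fun j hj => hout j (by rintro rfl; omega) (by omega), ?_⟩
  intro j hu hv
  have hj : j = j₀ ∨ u ≤ S j ∧ S j < v :=
    (eq_or_ne j j₀).imp_right fun hj => ⟨hu, hv.lt_of_ne fun h => hj (hS (h.trans hj₀.symm))⟩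
  have := hin j hj
  omega

theorem block_shift_left (n : ℕ) (r : Fin n → ℤ) (hr : Function.Injective r)
    (S : Fin n → ℤ) (hS : Function.Injective S) (hfeas : ∀ j, r j ≤ S j)
    (u v : ℤ) (huv : u ≤ v)
    (hbusy : ∀ t : ℤ, u ≤ t → t ≤ v → ∃ j, S j = t)
    (hleft : ∀ j, S j ≠ u - 1)
    (hright : ∀ j, S j ≠ v + 1)
    (j₀ : Fin n) (hj₀ : S j₀ = v) (hrj₀ : r j₀ < v) :
    ∃ S' : Fin n → ℤ, Function.Injective S' ∧ (∀ j, r j ≤ S' j) ∧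
      (∀ j, (S j < u ∨ v < S j) → S' j = S j) ∧
      (∀ j, u ≤ S j → S j ≤ v → u - 1 ≤ S' j ∧ S' j ≤ v - 1) :=
  block_shift_left_general n r hr S hS hfeas u v huv hbusy hleft j₀ hj₀ hrj₀
end

section
/- Distinct release times normalization preserves feasibility: given unit jobs with windows [r_j, d_j], if two jobs i ≠ j have r_i = r_j and d_i ≤ d_j, then replacing r_j by r_j + 1 yields an instance that is feasible if and only if the original is, and moreover any schedule of one instance is a schedule of the other with the same set of busy slots (after possibly swapping the slots of i and j). -/
open Function

def IsSchedule {ι α : Type*} [Preorder α] (r d S : ι → α) : Prop :=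
  Injective S ∧ ∀ k, r k ≤ S k ∧ S k ≤ d k

namespace IsSchedule

variable {ι : Type*}

theorem mono_release {α : Type*} [Preorder α] {r r' d S : ι → α} (hS : IsSchedule r' d S)
    (h : r ≤ r') : IsSchedule r d S :=
  ⟨hS.1, fun k => ⟨(h k).trans (hS.2 k).1, (hS.2 k).2⟩⟩

variable [DecidableEq ι] {r d S : ι → ℤ} {i j : ι}

/-- If `j` sits at its release time, `i` (same release, earlier deadline) sits strictly later,
so exchanging the two slots respects the delayed release of `j`. -/
theorem swap_of_release_eq (hS : IsSchedule r d S) (hij : i ≠ j) (hr : r i = r j)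
    (hd : d i ≤ d j) (hSj : S j = r j) :
    IsSchedule (update r j (r j + 1)) d (S ∘ Equiv.swap i j) := by
  have hSi : r j + 1 ≤ S i := by
    have : S i ≠ S j := hS.1.ne hij
    have := (hS.2 i).1
    omega
  refine ⟨hS.1.comp (Equiv.swap i j).injective, fun k => ?_⟩
  rcases eq_or_ne k j with rfl | hkj
  · simpa using ⟨hSi, (hS.2 i).2.trans hd⟩
  rw [update_of_ne hkj]
  rcases eq_or_ne k i with rfl | hki
  · simpa [hSj, ← hr] using (hS.2 k).1.trans (hS.2 k).2
  · simpa [Equiv.swap_apply_of_ne_of_ne hki hkj] using hS.2 k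

theorem exists_delay_release (hS : IsSchedule r d S) (hij : i ≠ j) (hr : r i = r j)
    (hd : d i ≤ d j) :
    ∃ S', IsSchedule (update r j (r j + 1)) d S' ∧ Set.range S' = Set.range S := by
  by_cases hSj : S j = r j
  · exact ⟨_, hS.swap_of_release_eq hij hr hd hSj, (Equiv.swap i j).surjective.range_comp S⟩
  · refine ⟨S, ⟨hS.1, fun k => ⟨?_, (hS.2 k).2⟩⟩, rfl⟩
    rcases eq_or_ne k j with rfl | hkj
    · have := (hS.2 k).1
      simp only [update_self]
      omega
    · simpa [update_of_ne hkj] using (hS.2 k).1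

end IsSchedule

theorem release_time_normalization (n : ℕ) (r d : Fin n → ℤ) (i j : Fin n)
    (hij : i ≠ j) (hr : r i = r j) (hd : d i ≤ d j) :
    ((∃ S : Fin n → ℤ, Function.Injective S ∧ ∀ k, r k ≤ S k ∧ S k ≤ d k) ↔
      (∃ S : Fin n → ℤ, Function.Injective S ∧
        ∀ k, Function.update r j (r j + 1) k ≤ S k ∧ S k ≤ d k)) ∧
    (∀ S : Fin n → ℤ, Function.Injective S → (∀ k, r k ≤ S k ∧ S k ≤ d k) →
      ∃ S' : Fin n → ℤ, Function.Injective S' ∧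
        (∀ k, Function.update r j (r j + 1) k ≤ S' k ∧ S' k ≤ d k) ∧
        Set.range S' = Set.range S) ∧
    (∀ S : Fin n → ℤ, Function.Injective S →
      (∀ k, Function.update r j (r j + 1) k ≤ S k ∧ S k ≤ d k) →
      ∃ S' : Fin n → ℤ, Function.Injective S' ∧ (∀ k, r k ≤ S' k ∧ S' k ≤ d k) ∧
        Set.range S' = Set.range S) := by
  have hle : r ≤ update r j (r j + 1) := by simp
  have fwd : ∀ S, IsSchedule r d S →
      ∃ S', IsSchedule (update r j (r j + 1)) d S' ∧ Set.range S' = Set.range S :=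
    fun S hS => hS.exists_delay_release hij hr hd
  have bwd : ∀ S, IsSchedule (update r j (r j + 1)) d S →
      ∃ S', IsSchedule r d S' ∧ Set.range S' = Set.range S :=
    fun S hS => ⟨S, hS.mono_release hle, rfl⟩
  have feasible_iff : (∃ S, IsSchedule r d S) ↔ ∃ S, IsSchedule (update r j (r j + 1)) d S :=
    ⟨fun ⟨S, hS⟩ => (fwd S hS).imp fun _ => And.left,
      fun ⟨S, hS⟩ => (bwd S hS).imp fun _ => And.left⟩
  simp only [IsSchedule, and_imp, and_assoc] at fwd bwd feasible_iff
  exact ⟨feasible_iff, fwd, bwd⟩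
end

section
/- Exchange to earliest-deadline property: any feasible schedule S of unit jobs with windows [r_j, d_j] can be transformed into a schedule S' with exactly the same set of busy slots such that at every busy slot t, the job scheduled at t has the minimum deadline among all jobs j with r_j ≤ t that are scheduled at some slot ≥ t. -/
theorem exchange_to_earliest_deadline (n : ℕ) (r d : Fin n → ℤ)
    (S : Fin n → ℤ) (hinj : Function.Injective S)
    (hfeas : ∀ j, r j ≤ S j ∧ S j ≤ d j) :
    ∃ S' : Fin n → ℤ, Function.Injective S' ∧ (∀ j, r j ≤ S' j ∧ S' j ≤ d j) ∧
      Set.range S' = Set.range S ∧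
      ∀ j k, r k ≤ S' j → S' j ≤ S' k → d j ≤ d k := by
  classical
  set P : Finset (Equiv.Perm (Fin n)) :=
    Finset.univ.filter (fun σ => ∀ j, r j ≤ S (σ j) ∧ S (σ j) ≤ d j) with hPdef
  have hP1 : (1 : Equiv.Perm (Fin n)) ∈ P := by
    simp [hPdef, hfeas]
  obtain ⟨σ, hσP, hmax⟩ :=
    P.exists_max_image (fun σ => ∑ j, d j * S (σ j)) ⟨1, hP1⟩
  have hσfeas : ∀ j, r j ≤ S (σ j) ∧ S (σ j) ≤ d j := by
    simpa [hPdef] using hσP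
  refine ⟨S ∘ σ, hinj.comp σ.injective, hσfeas, ?_, ?_⟩
  · rw [Set.range_comp, σ.surjective.range_eq, Set.image_univ]
  · intro j k hrk hle
    by_contra hd
    push_neg at hd
    simp only [Function.comp_apply] at hrk hle
    have hjk : j ≠ k := by rintro rfl; exact absurd le_rfl (not_le.mpr hd)
    have hlt : S (σ j) < S (σ k) :=
      lt_of_le_of_ne hle (fun h => hjk (σ.injective (hinj h)))
    set σ' := σ * Equiv.swap j k with hσ'def
    have hσ'j : σ' j = σ k := by simp [hσ'def]
    have hσ'k : σ' k = σ j := by simp [hσ'def]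
    have hσ'i : ∀ i, i ≠ j → i ≠ k → σ' i = σ i := by
      intro i h1 h2; simp [hσ'def, Equiv.swap_apply_of_ne_of_ne h1 h2]
    have hσ'P : σ' ∈ P := by
      simp only [hPdef, Finset.mem_filter, Finset.mem_univ, true_and]
      intro i
      rcases eq_or_ne i j with rfl | h1
      · rw [hσ'j]
        exact ⟨(hσfeas i).1.trans hle, (hσfeas k).2.trans hd.le⟩
      rcases eq_or_ne i k with rfl | h2
      · rw [hσ'k]
        exact ⟨hrk, hle.trans (hσfeas i).2⟩
      · rw [hσ'i i h1 h2]; exact hσfeas i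
    have hm := hmax σ' hσ'P
    have hsub : (∑ i, (d i * S (σ' i) - d i * S (σ i))) ≤ 0 := by
      rw [Finset.sum_sub_distrib]
      omega
    have hkey : (∑ i, (d i * S (σ' i) - d i * S (σ i)))
        = (d j * S (σ k) - d j * S (σ j)) + (d k * S (σ j) - d k * S (σ k)) := by
      rw [← Finset.sum_subset (Finset.subset_univ {j, k})]
      · rw [Finset.sum_pair hjk, hσ'j, hσ'k]
      · intro i _ hi
        simp only [Finset.mem_insert, Finset.mem_singleton, not_or] at hi
        rw [hσ'i i hi.1 hi.2]
        ring
    rw [hkey] at hsub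
    nlinarith [mul_pos (sub_pos.mpr hd) (sub_pos.mpr hlt)]
end

section
/- Candidate values for optimal maximum flow lie in a sumset: in an optimal schedule of unit jobs 1,...,n (scheduled in index order, with each block containing a job executed at its release time), the maximum flow time equals either r_i + (i' − i) − r_{i'} for some indices i ≤ i', or (r_j − j) − (r_{i'} − i') for some indices; hence the optimal maximum flow belongs to the set X + Y where X = { r_j − j : 1 ≤ j ≤ n } and Y = (−X) ∪ {0, 1, ..., n}. -/
theorem max_flow_in_sumset (n : ℕ) (hn : 1 ≤ n) (r : ℕ → ℤ)
    (hr : ∀ j k, 1 ≤ j → j ≤ k → k ≤ n → r j ≤ r k)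
    (S : ℕ → ℤ)
    (horder : ∀ j k, 1 ≤ j → j < k → k ≤ n → S j < S k)
    (hfeas : ∀ j, 1 ≤ j → j ≤ n → r j ≤ S j)
    (hblock : ∀ j, 1 ≤ j → j ≤ n → ∃ k, 1 ≤ k ∧ k ≤ n ∧ S k = r k ∧
      ∀ t : ℤ, min (S j) (S k) ≤ t → t ≤ max (S j) (S k) →
        ∃ m, 1 ≤ m ∧ m ≤ n ∧ S m = t)
    (F : ℤ)
    (hFmax : IsGreatest {fl : ℤ | ∃ j, 1 ≤ j ∧ j ≤ n ∧ fl = S j - r j} F) :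
    ((∃ i i', 1 ≤ i ∧ i ≤ i' ∧ i' ≤ n ∧ F = r i + ((i' : ℤ) - (i : ℤ)) - r i') ∨
      (∃ j i', 1 ≤ j ∧ j ≤ n ∧ 1 ≤ i' ∧ i' ≤ n ∧
        F = (r j - (j : ℤ)) - (r i' - (i' : ℤ)))) ∧
    (∃ x y : ℤ, (∃ j, 1 ≤ j ∧ j ≤ n ∧ x = r j - (j : ℤ)) ∧
      ((∃ m, 1 ≤ m ∧ m ≤ n ∧ y = -(r m - (m : ℤ))) ∨ (∃ c : ℕ, c ≤ n ∧ y = (c : ℤ))) ∧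
      F = x + y) := by
  classical
  have hmono : ∀ a b, 1 ≤ a → a ≤ b → b ≤ n → S a ≤ S b := by
    intro a b ha hab hbn
    rcases lt_or_eq_of_le hab with h | h
    · exact (horder a b ha h hbn).le
    · rw [h]
  have hge : ∀ a b, 1 ≤ a → a ≤ b → b ≤ n → (b : ℤ) - a ≤ S b - S a := by
    intro a b ha hab hbn
    induction b, hab using Nat.le_induction with
    | base => simp
    | succ b hb ih =>
      have h1 : S b < S (b + 1) := horder b (b + 1) (le_trans ha hb) (by omega) hbn
      have h2 := ih (by omega)
      push_cast at h2 ⊢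
      omega
  have hle : ∀ a b, 1 ≤ a → a ≤ b → b ≤ n →
      (∀ t : ℤ, S a ≤ t → t ≤ S b → ∃ m, 1 ≤ m ∧ m ≤ n ∧ S m = t) →
      S b - S a ≤ (b : ℤ) - a := by
    intro a b ha hab hbn hfull
    set g : ℤ → ℕ := fun t =>
      if h : S a ≤ t ∧ t ≤ S b then (hfull t h.1 h.2).choose else 0 with hg
    have hgspec : ∀ t, S a ≤ t → t ≤ S b → 1 ≤ g t ∧ g t ≤ n ∧ S (g t) = t := by
      intro t h1 h2
      have : g t = (hfull t h1 h2).choose := by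
        rw [hg]; exact dif_pos ⟨h1, h2⟩
      rw [this]
      exact (hfull t h1 h2).choose_spec
    have hmem : ∀ t ∈ Finset.Icc (S a) (S b), g t ∈ Finset.Icc a b := by
      intro t ht
      rw [Finset.mem_Icc] at ht ⊢
      obtain ⟨hg1, hgn, hgt⟩ := hgspec t ht.1 ht.2
      constructor
      · by_contra h
        push_neg at h
        have := horder (g t) a hg1 h (le_trans hab hbn)
        linarith [ht.1]
      · by_contra h
        push_neg at h
        have := horder b (g t) (le_trans ha hab) h hgn
        linarith [ht.2]
    have hinj : Set.InjOn g (Finset.Icc (S a) (S b)) := by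
      intro t1 h1 t2 h2 he
      rw [Finset.coe_Icc, Set.mem_Icc] at h1 h2
      have e1 := (hgspec t1 h1.1 h1.2).2.2
      have e2 := (hgspec t2 h2.1 h2.2).2.2
      rw [← e1, ← e2, he]
    have hcard := Finset.card_le_card_of_injOn g hmem hinj
    rw [Int.card_Icc, Nat.card_Icc] at hcard
    have := hmono a b ha hab hbn
    omega
  obtain ⟨⟨j, hj1, hjn, hFj⟩, hub⟩ := hFmax
  obtain ⟨k, hk1, hkn, hSkr, hfull⟩ := hblock j hj1 hjn
  have heq : S j - S k = (j : ℤ) - k := by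
    rcases le_total j k with h | h
    · have h1 := hge j k hj1 h hkn
      have h2 := hle j k hj1 h hkn (fun t ht1 ht2 =>
        hfull t (le_trans (min_le_left _ _) ht1) (le_trans ht2 (le_max_right _ _)))
      push_cast at h1 h2 ⊢
      omega
    · have h1 := hge k j hk1 h hjn
      have h2 := hle k j hk1 h hjn (fun t ht1 ht2 =>
        hfull t (le_trans (min_le_right _ _) ht1) (le_trans ht2 (le_max_left _ _)))
      push_cast at h1 h2 ⊢
      omega
  have hF : F = (r k - (k : ℤ)) - (r j - (j : ℤ)) := by
    rw [hFj, ← hSkr]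
    linarith [heq]
  refine ⟨Or.inr ⟨k, j, hk1, hkn, hj1, hjn, hF⟩,
    ⟨r k - (k : ℤ), -(r j - (j : ℤ)), ⟨k, hk1, hkn, rfl⟩,
      Or.inl ⟨j, hj1, hjn, rfl⟩, by linarith [hF]⟩⟩
end
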